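/- Every finite spanning set of a finite-dimensional complex inner product space whose transition graph (edges given by nonvanishing inner products) is connected contains a subset that is a basis whose transition graph is also connected. -/

import Mathlib

open scoped ComplexInnerProductSpace

/-- The transition graph of a set of vectors: vertices are the vectors,
two distinct vectors are adjacent iff their inner product is nonzero. -/
noncomputable def transGraph {E : Type*} [NormedAddCommGroup E] [InnerProductSpace ℂ E]
    (T : Set E) : SimpleGraph T where
  Adj v w := v ≠ w ∧ ⟪(v : E), (w : E)⟫ ≠ 0
  symm := ⟨by
    rintro v w ⟨hne, h⟩
    exact ⟨hne.symm, fun hz => h (inner_eq_zero_symm.mp hz)⟩⟩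
  loopless := ⟨fun v h => h.1 rfl⟩

lemma inner_ne_zero_of_mem_span {E : Type*} [NormedAddCommGroup E] [InnerProductSpace ℂ E]
    {S : Set E} {p q : E} (hp : p ∈ Submodule.span ℂ S) (h : ⟪p, q⟫ ≠ 0) :
    ∃ v ∈ S, ⟪v, q⟫ ≠ 0 := by
  by_contra hc
  push_neg at hc
  refine h ?_
  clear h
  induction hp using Submodule.span_induction with
  | mem x hx => exact hc x hx
  | zero => simp
  | add x y _ _ hx hy => rw [inner_add_left, hx, hy, add_zero]
  | smul c x _ hx => rw [inner_smul_left, hx, mul_zero]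

lemma exists_crossing {E : Type*} [NormedAddCommGroup E] [InnerProductSpace ℂ E]
    {T : Set E} {U : Submodule ℂ E} :
    ∀ {a b : T}, (transGraph T).Walk a b → (a : E) ∈ U → (b : E) ∉ U →
    ∃ p q : T, (transGraph T).Adj p q ∧ (p : E) ∈ U ∧ (q : E) ∉ U := by
  intro a b w
  induction w with
  | nil => intro ha hb; exact absurd ha hb
  | cons h w ih =>
    rename_i u c d
    intro ha hb
    by_cases hcU : (c : E) ∈ U
    · exact ih hcU hb
    · exact ⟨_, _, h, ha, hcU⟩

lemma reachable_mono {E : Type*} [NormedAddCommGroup E] [InnerProductSpace ℂ E]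
    {A B : Set E} (hAB : A ⊆ B) {u v : A}
    (h : (transGraph A).Reachable u v) :
    (transGraph B).Reachable ⟨u, hAB u.2⟩ ⟨v, hAB v.2⟩ := by
  let f : transGraph A →g transGraph B :=
    { toFun := fun x => ⟨x.1, hAB x.2⟩,
      map_rel' := by
        rintro a b ⟨hne, hi⟩
        refine ⟨fun he => hne ?_, hi⟩
        ext
        exact congrArg (Subtype.val : B → E) he }
  exact h.map f

/-- Every finite connected spanning set of a finite-dimensional complex inner product space
contains a subset that is a connected basis. -/
theorem connected_spanning_contains_connected_basis
    {E : Type*} [NormedAddCommGroup E] [InnerProductSpace ℂ E] [FiniteDimensional ℂ E]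
    [Nontrivial E]
    (T : Set E) (hTfin : T.Finite)
    (hTspan : Submodule.span ℂ T = ⊤) (hTconn : (transGraph T).Connected) :
    ∃ S ⊆ T, LinearIndependent ℂ ((↑) : S → E) ∧ Submodule.span ℂ S = ⊤ ∧
      (transGraph S).Connected := by
  classical
  let P : Finset E → Prop := fun s =>
    (↑s : Set E) ⊆ T ∧ (LinearIndependent ℂ ((↑) : (↑s : Set E) → E)) ∧
      (transGraph (↑s : Set E)).Connected
  -- there is a nonzero element of T
  obtain ⟨t₀, ht₀T, ht₀⟩ : ∃ t ∈ T, t ≠ 0 := by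
    by_contra hco
    push_neg at hco
    obtain ⟨x, hx⟩ := exists_ne (0 : E)
    have hle : Submodule.span ℂ T ≤ ⊥ :=
      Submodule.span_le.mpr (fun t ht => by simp [hco t ht])
    rw [hTspan] at hle
    exact hx ((Submodule.mem_bot ℂ).mp (hle Submodule.mem_top))
  have hP0 : P {t₀} := by
    refine ⟨by simpa using ht₀T, ?_, ?_⟩
    · rw [Finset.coe_singleton]
      exact (linearIndepOn_singleton_iff (R := ℂ) (v := (id : E → E))).mpr ht₀
    · rw [Finset.coe_singleton]
      have hne : Nonempty (↥({t₀} : Set E)) := ⟨⟨t₀, rfl⟩⟩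
      refine SimpleGraph.Connected.mk fun u v => ?_
      have hu : (u : E) = t₀ := u.2
      have hv : (v : E) = t₀ := v.2
      have : u = v := Subtype.ext (hu.trans hv.symm)
      exact this ▸ SimpleGraph.Reachable.refl u
  -- the collection of good subsets
  let C : Finset (Finset E) := hTfin.toFinset.powerset.filter P
  have hmemC : ∀ s : Finset E, s ∈ C ↔ P s := by
    intro s
    simp only [C, Finset.mem_filter, Finset.mem_powerset, and_iff_right_iff_imp]
    intro hP
    intro x hx
    exact hTfin.mem_toFinset.mpr (hP.1 hx)
  obtain ⟨s, hsC, hmax⟩ :=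
    Finset.exists_max_image C Finset.card ⟨{t₀}, (hmemC _).mpr hP0⟩
  obtain ⟨hsT, hli, hconn⟩ := (hmemC s).mp hsC
  refine ⟨(↑s : Set E), hsT, hli, ?_, hconn⟩
  -- it remains to show the span is everything
  by_contra hns
  have hex : ∃ t ∈ T, t ∉ Submodule.span ℂ (↑s : Set E) := by
    by_contra hco
    push_neg at hco
    have hle : Submodule.span ℂ T ≤ Submodule.span ℂ (↑s : Set E) :=
      Submodule.span_le.mpr hco
    rw [hTspan] at hle
    exact hns (top_unique hle)
  obtain ⟨t, htT, htU⟩ := hex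
  obtain ⟨⟨s₀, hs₀⟩⟩ := hconn.nonempty
  obtain ⟨w⟩ := hTconn.preconnected ⟨s₀, hsT hs₀⟩ ⟨t, htT⟩
  obtain ⟨p, q, hadj, hpU, hqU⟩ := exists_crossing w (Submodule.subset_span hs₀) htU
  obtain ⟨v, hvs, hvq⟩ := inner_ne_zero_of_mem_span hpU hadj.2
  have hqs : (q : E) ∉ (↑s : Set E) := fun h => hqU (Submodule.subset_span h)
  -- the extended set
  set s' : Finset E := insert (q : E) s with hs'
  have hcoe : ((s' : Finset E) : Set E) = insert (q : E) (↑s : Set E) := by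
    simp [hs']
  have hsub' : (↑s' : Set E) ⊆ T := by
    rw [hcoe]
    exact Set.insert_subset q.2 hsT
  have hli' : LinearIndependent ℂ ((↑) : (↑s' : Set E) → E) := by
    rw [hcoe]
    exact (linearIndepOn_id_insert hqs).mpr ⟨hli, hqU⟩
  have hvmem : (v : E) ∈ insert (q : E) (↑s : Set E) := Set.mem_insert_iff.mpr (Or.inr hvs)
  have hvU : v ∈ Submodule.span ℂ (↑s : Set E) := Submodule.subset_span hvs
  have aux : ∀ x : ↥(insert (q : E) (↑s : Set E)),
      (transGraph (insert (q : E) (↑s : Set E))).Reachable x ⟨v, hvmem⟩ := by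
    intro x
    rcases Set.mem_insert_iff.mp x.2 with hxq | hxs
    · refine SimpleGraph.Adj.reachable ?_
      refine ⟨fun he => ?_, ?_⟩
      · apply hqU
        have : (x : E) = v := congrArg Subtype.val he
        rw [← hxq, this]
        exact hvU
      · rw [hxq]
        intro hz
        exact hvq (inner_eq_zero_symm.mp hz)
    · have hr := reachable_mono (Set.subset_insert (q : E) (↑s : Set E))
        (hconn.preconnected ⟨x.1, hxs⟩ ⟨v, hvs⟩)
      have hx' : (⟨x.1, Set.subset_insert _ _ hxs⟩ : ↥(insert (q : E) (↑s : Set E))) = x :=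
        Subtype.ext rfl
      rwa [hx'] at hr
  have hconn' : (transGraph (↑s' : Set E)).Connected := by
    rw [hcoe]
    have hne : Nonempty (↥(insert (q : E) (↑s : Set E))) := ⟨⟨v, hvmem⟩⟩
    exact SimpleGraph.Connected.mk fun a b => (aux a).trans (aux b).symm
  have hP' : P s' := ⟨hsub', hli', hconn'⟩
  have hcard : s'.card = s.card + 1 :=
    Finset.card_insert_of_notMem (by exact_mod_cast hqs)
  have := hmax s' ((hmemC s').mpr hP')
  omega
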